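/- Let Π* ∈ ℝ_{≥0}^{k×m} have rank k, let K = cone(Π*) ⊂ ℝ^k (the conic hull of its columns), and assume C_k ⊆ K and K* ∩ bd(C_k*) = {λe_j : j ∈ [k], λ ≥ 0}, where C_k = {x : 𝟙ᵀx ≥ √(k−1)‖x‖₂}, C_k* = {x : 𝟙ᵀx ≥ ‖x‖₂}, and K* is the dual cone of K. If A ∈ GL(k,ℝ) satisfies AΠ* ≥ 0 entrywise and Aᵀ𝟙 = 𝟙, then |det(A)| ≤ 1, with equality if and only if A is a permutation matrix. -/

import Mathlib

open Finset

/-- The conic hull of the columns of a nonnegative matrix. -/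
def matCone {k m : ℕ} (M : Matrix (Fin k) (Fin m) ℝ) : Set (Fin k → ℝ) :=
  {x | ∃ θ : Fin m → ℝ, (∀ j, 0 ≤ θ j) ∧ x = M.mulVec θ}

/-- The dual cone of a set of vectors. -/
def dualCone {k : ℕ} (C : Set (Fin k → ℝ)) : Set (Fin k → ℝ) :=
  {y | ∀ x ∈ C, 0 ≤ ∑ i, y i * x i}

/-- The second-order cone `C_k`. -/
def secondOrderCone (k : ℕ) : Set (Fin k → ℝ) :=
  {x | Real.sqrt (k - 1) * Real.sqrt (∑ i, (x i) ^ 2) ≤ ∑ i, x i}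

/-- The cone `C_k^*`. -/
def secondOrderConeDual (k : ℕ) : Set (Fin k → ℝ) :=
  {x | Real.sqrt (∑ i, (x i) ^ 2) ≤ ∑ i, x i}

def IsPermutationMatrix {k : ℕ} (A : Matrix (Fin k) (Fin k) ℝ) : Prop :=
  ∃ σ : Equiv.Perm (Fin k), ∀ i j, A i j = if σ i = j then 1 else 0

/-!
Each row `a` of `A` pairs nonnegatively with the columns of `Π*`, so it lies in
`K* ⊆ C_k* = {a : ‖a‖ ≤ 𝟙ᵀa}`, and since `Aᵀ𝟙 = 𝟙` the row sums add up to `k`. Hadamard's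
inequality and AM–GM (in the form `t ≤ exp (t - 1)`) then give `|det A| ≤ ∏ ‖aᵢ‖ ≤ 1`. In the
equality case every row has `‖aᵢ‖ = 𝟙ᵀaᵢ = 1`, which puts it on `K* ∩ bd C_k*`, so it is a
standard basis vector; invertibility makes these basis vectors distinct.
-/

section AMGM

variable {ι : Type*} [Fintype ι] {s : ι → ℝ}

lemma prod_exp_sub_one_le_one (hsum : ∑ i, s i ≤ Fintype.card ι) :
    ∏ i, Real.exp (s i - 1) ≤ 1 := by
  rw [← Real.exp_sum, Real.exp_le_one_iff, sum_sub_distrib]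
  simpa using hsum

lemma prod_le_one_of_sum_le_card (hs : ∀ i, 0 ≤ s i) (hsum : ∑ i, s i ≤ Fintype.card ι) :
    ∏ i, s i ≤ 1 :=
  (prod_le_prod (fun i _ => hs i) fun i _ => by linarith [Real.add_one_le_exp (s i - 1)]).trans
    (prod_exp_sub_one_le_one hsum)

lemma eq_one_of_prod_eq_one_of_sum_le_card (hs : ∀ i, 0 ≤ s i)
    (hsum : ∑ i, s i ≤ Fintype.card ι) (hprod : ∏ i, s i = 1) (i : ι) : s i = 1 := by
  by_contra hi
  have hpos : ∀ j, 0 < s j := fun j =>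
    (hs j).lt_of_ne' (prod_ne_zero_iff.mp (hprod ▸ one_ne_zero) j (mem_univ j))
  have hlt : s i < Real.exp (s i - 1) := by
    linarith [Real.add_one_lt_exp (x := s i - 1) (by contrapose! hi; linarith)]
  have := prod_lt_prod (g := fun j => Real.exp (s j - 1)) (fun j _ => hpos j)
    (fun j _ => by linarith [Real.add_one_le_exp (s j - 1)]) ⟨i, mem_univ i, hlt⟩
  linarith [prod_exp_sub_one_le_one hsum]

end AMGM

section

variable {k : ℕ}

lemma abs_det_le_prod_row_norm (A : Matrix (Fin k) (Fin k) ℝ) :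
    |A.det| ≤ ∏ i, √(∑ j, A i j ^ 2) := by
  have : Fact (Module.finrank ℝ (EuclideanSpace ℝ (Fin k)) = k) := ⟨finrank_euclideanSpace_fin⟩
  let b := EuclideanSpace.basisFun (Fin k) ℝ
  let v : Fin k → EuclideanSpace ℝ (Fin k) := fun i => WithLp.toLp 2 (A i)
  have hdet : b.toBasis.det v = A.det := by
    rw [Module.Basis.det_apply, ← A.det_transpose]
    congr 1
  have hnorm : ∀ i, ‖v i‖ = √(∑ j, A i j ^ 2) := fun i => by
    simp [v, EuclideanSpace.norm_eq]
  calc |A.det| = |b.toBasis.orientation.volumeForm v| := by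
        rw [b.toBasis.orientation.volumeForm_robust' b, hdet]
    _ ≤ ∏ i, ‖v i‖ := b.toBasis.orientation.abs_volumeForm_apply_le v
    _ = ∏ i, √(∑ j, A i j ^ 2) := by simp only [hnorm]

lemma IsPermutationMatrix.abs_det_eq_one {A : Matrix (Fin k) (Fin k) ℝ}
    (h : IsPermutationMatrix A) : |A.det| = 1 := by
  obtain ⟨σ, hσ⟩ := h
  have : A = σ.permMatrix ℝ := by
    ext i j
    simp [hσ, Equiv.toPEquiv]
  rw [this, Matrix.det_permutation]
  rcases Int.units_eq_one_or σ.sign with hσ' | hσ' <;> simp [hσ']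

lemma isPermutationMatrix_of_rows_eq_single {A : Matrix (Fin k) (Fin k) ℝ} (hA : A.det ≠ 0)
    (h : ∀ i, ∃ j, A i = fun j' => if j' = j then 1 else 0) : IsPermutationMatrix A := by
  choose φ hφ using h
  have hφinj : φ.Injective := fun i i' hii' => by
    by_contra hne
    exact hA (Matrix.det_zero_of_row_eq hne (by rw [hφ i, hφ i', hii']))
  refine ⟨Equiv.ofBijective φ hφinj.bijective_of_finite, fun i j => ?_⟩
  simp [hφ i, eq_comm]

lemma dualCone_anti {C D : Set (Fin k → ℝ)} (h : C ⊆ D) : dualCone D ⊆ dualCone C :=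
  fun _ hy x hx => hy x (h hx)

lemma row_mem_dualCone_matCone {n m : ℕ} {A : Matrix (Fin n) (Fin k) ℝ}
    {M : Matrix (Fin k) (Fin m) ℝ} {i : Fin n} (h : ∀ j, 0 ≤ (A * M) i j) :
    A i ∈ dualCone (matCone M) := by
  rintro _ ⟨θ, hθ, rfl⟩
  change 0 ≤ A.mulVec (M.mulVec θ) i
  rw [Matrix.mulVec_mulVec, Matrix.mulVec, dotProduct]
  exact sum_nonneg fun j _ => mul_nonneg (h j) (hθ j)

lemma one_mem_secondOrderCone : (fun _ => 1) ∈ secondOrderCone k := by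
  have hk : (0 : ℝ) ≤ k := k.cast_nonneg
  simp only [secondOrderCone, Set.mem_ofPred_eq, one_pow, sum_const, card_univ,
    Fintype.card_fin, nsmul_eq_mul, mul_one]
  calc √(k - 1) * √k ≤ √k * √k := by gcongr; linarith
    _ = k := Real.mul_self_sqrt hk

-- A boundary point of `C_k`: both sides of its defining inequality equal `k √(k - 1) ‖z‖`.
lemma sub_mem_secondOrderCone {z : Fin k → ℝ} (hz : ∑ i, z i = 0) :
    (fun i => √(k - 1) * √(∑ j, z j ^ 2) - √k * z i) ∈ secondOrderCone k := by
  rcases k.eq_zero_or_pos with rfl | hk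
  · simp [secondOrderCone]
  set r := √(∑ j, z j ^ 2)
  have hk1 : (1 : ℝ) ≤ k := by exact_mod_cast hk
  have hr : r ^ 2 = ∑ j, z j ^ 2 := Real.sq_sqrt (by positivity)
  have ha : √(k - 1) ^ 2 = k - 1 := Real.sq_sqrt (by linarith)
  have hb : √(k : ℝ) ^ 2 = k := Real.sq_sqrt (by linarith)
  have hsum : ∑ i, (√(k - 1) * r - √k * z i) = k * (√(k - 1) * r) := by
    simp [sum_sub_distrib, ← mul_sum, hz]
  have hsq : ∑ i, (√(k - 1) * r - √k * z i) ^ 2 = (k * r) ^ 2 := by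
    simp only [sub_sq, sum_add_distrib, sum_sub_distrib, mul_pow, ← mul_sum, ← hr]
    simp [hz, ha, hb]
    ring
  show √(k - 1) * √(∑ i, (√(k - 1) * r - √k * z i) ^ 2) ≤ ∑ i, (√(k - 1) * r - √k * z i)
  rw [hsq, hsum, Real.sqrt_sq (by positivity)]
  exact (mul_left_comm _ _ _).le

lemma dualCone_secondOrderCone_subset : dualCone (secondOrderCone k) ⊆ secondOrderConeDual k := by
  intro y hy
  rcases k.eq_zero_or_pos with rfl | hk
  · simp [secondOrderConeDual]
  have hk1 : (1 : ℝ) ≤ k := by exact_mod_cast hk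
  set t := ∑ i, y i
  set z : Fin k → ℝ := fun i => y i - t / k
  set r := √(∑ j, z j ^ 2)
  have hz : ∑ i, z i = 0 := by
    simp only [z, sum_sub_distrib, sum_const, card_univ, Fintype.card_fin, nsmul_eq_mul]
    field_simp
    ring
  have hr : r ^ 2 = ∑ j, z j ^ 2 := Real.sq_sqrt (by positivity)
  have ht : 0 ≤ t := by simpa using hy _ one_mem_secondOrderCone
  have hyz : ∑ i, y i * z i = r ^ 2 := calc
    ∑ i, y i * z i = ∑ i, (z i ^ 2 + t / k * z i) := sum_congr rfl fun i _ => by ring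
    _ = r ^ 2 := by rw [sum_add_distrib, ← mul_sum, hz, hr, mul_zero, add_zero]
  have hy2 : ∑ i, y i ^ 2 = r ^ 2 + t ^ 2 / k := calc
    ∑ i, y i ^ 2 = ∑ i, (z i ^ 2 + 2 * (t / k) * z i + (t / k) ^ 2) :=
      sum_congr rfl fun i _ => by ring
    _ = r ^ 2 + t ^ 2 / k := by
      simp only [sum_add_distrib, ← mul_sum, hz, hr, sum_const, card_univ, Fintype.card_fin,
        nsmul_eq_mul]
      field_simp
      ring
  have hpair : √k * r ^ 2 ≤ √(k - 1) * r * t := by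
    have := hy _ (sub_mem_secondOrderCone hz)
    simp only [mul_sub, sum_sub_distrib, ← sum_mul, mul_left_comm _ (√(k:ℝ)), ← mul_sum,
      hyz] at this
    linarith
  have hkr : k * r ^ 2 ≤ (k - 1) * t ^ 2 := by
    rcases (show 0 ≤ r from Real.sqrt_nonneg _).eq_or_lt with hr0 | hr0
    · rw [← hr0]
      nlinarith
    have : √k * r ≤ √(k - 1) * t := le_of_mul_le_mul_right (by linarith) hr0
    have := pow_le_pow_left₀ (by positivity) this 2
    rwa [mul_pow, mul_pow, Real.sq_sqrt (x := k) (by linarith),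
      Real.sq_sqrt (x := k - 1) (by linarith)] at this
  show √(∑ i, y i ^ 2) ≤ t
  rw [Real.sqrt_le_left ht, hy2]
  calc r ^ 2 + t ^ 2 / k = (k * r ^ 2 + t ^ 2) / k := by field_simp
    _ ≤ k * t ^ 2 / k := by gcongr; linarith
    _ = t ^ 2 := by field_simp

lemma mem_frontier_secondOrderConeDual (hk : 2 ≤ k) {x : Fin k → ℝ} (hsum : ∑ i, x i = 1)
    (hsq : ∑ i, x i ^ 2 = 1) : x ∈ frontier (secondOrderConeDual k) := by
  have hk' : (2 : ℝ) ≤ k := by exact_mod_cast hk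
  have hx : x ∈ secondOrderConeDual k := by
    simp [secondOrderConeDual, hsum, hsq]
  rw [frontier_eq_closure_inter_closure]
  refine ⟨subset_closure hx, ?_⟩
  -- Moving along `(1 + ε) x - ε 𝟙 / k` keeps `𝟙ᵀx = 1` but increases `‖x‖`.
  let γ : ℝ → Fin k → ℝ := fun ε i => (1 + ε) * x i - ε / k
  have hγ : Filter.Tendsto γ (nhdsWithin 0 (Set.Ioi 0)) (nhds x) := by
    have : Continuous γ := by fun_prop
    simpa [γ] using (this.tendsto 0).mono_left nhdsWithin_le_nhds
  refine mem_closure_of_tendsto hγ (eventually_nhdsWithin_of_forall fun ε (hε : 0 < ε) => ?_)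
  have hsum' : ∑ i, γ ε i = 1 := by
    simp only [γ, sum_sub_distrib, ← mul_sum, hsum, sum_const, card_univ, Fintype.card_fin,
      nsmul_eq_mul]
    field_simp
    ring
  have hsq' : ∑ i, γ ε i ^ 2 = 1 + (1 - 1 / k) * (2 * ε + ε ^ 2) := by
    simp only [γ, sub_sq, mul_pow, sum_add_distrib, sum_sub_distrib, ← mul_sum, ← sum_mul, hsum,
      hsq, sum_const, card_univ, Fintype.card_fin, nsmul_eq_mul]
    field_simp
    ring
  have : 1 < ∑ i, γ ε i ^ 2 := by
    rw [hsq']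
    have : 0 < 1 - 1 / (k : ℝ) := by
      rw [sub_pos, div_lt_one (by linarith)]
      linarith
    nlinarith
  simp only [Set.mem_compl_iff, secondOrderConeDual, Set.mem_ofPred_eq, hsum', not_le]
  rwa [Real.lt_sqrt zero_le_one, one_pow]

lemma eq_single_of_sum_eq_one_of_sum_sq_eq_one {K : Set (Fin k → ℝ)}
    (hK : K ∩ frontier (secondOrderConeDual k) ⊆
      {x | ∃ j : Fin k, ∃ lam : ℝ, 0 ≤ lam ∧ x = lam • (fun i => if i = j then (1:ℝ) else 0)})
    {x : Fin k → ℝ} (hx : x ∈ K) (hsum : ∑ i, x i = 1) (hsq : ∑ i, x i ^ 2 = 1) :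
    ∃ j, x = fun i => if i = j then 1 else 0 := by
  obtain _ | _ | k := k
  · simp at hsum
  · refine ⟨0, funext fun i => ?_⟩
    fin_cases i
    simpa using hsum
  obtain ⟨j, lam, -, rfl⟩ := hK ⟨hx, mem_frontier_secondOrderConeDual (by omega) hsum hsq⟩
  simp only [Pi.smul_apply, smul_eq_mul, mul_ite, mul_one, mul_zero, sum_ite_eq', mem_univ,
    if_true] at hsum
  exact ⟨j, by rw [hsum, one_smul]⟩

end

theorem det_bound_sufficiently_scattered_general
    {k m : ℕ} (Pi0 : Matrix (Fin k) (Fin m) ℝ)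
    (hC : secondOrderCone k ⊆ matCone Pi0)
    (hbd : dualCone (matCone Pi0) ∩ frontier (secondOrderConeDual k)
      = {x | ∃ j : Fin k, ∃ lam : ℝ, 0 ≤ lam ∧ x = lam • (fun i => if i = j then (1:ℝ) else 0)})
    (A : Matrix (Fin k) (Fin k) ℝ) (hA : IsUnit A.det)
    (hAP : ∀ a j, 0 ≤ (A * Pi0) a j)
    (hcol : ∀ j, ∑ i, A i j = 1) :
    |A.det| ≤ 1 ∧ (|A.det| = 1 ↔ IsPermutationMatrix A) := by
  have hdual (i : Fin k) : A i ∈ dualCone (matCone Pi0) := row_mem_dualCone_matCone (hAP i)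
  have hnorm (i : Fin k) : √(∑ j, A i j ^ 2) ≤ ∑ j, A i j :=
    dualCone_secondOrderCone_subset (dualCone_anti hC (hdual i))
  have hrows : ∑ i, ∑ j, A i j = Fintype.card (Fin k) := by
    simp [sum_comm (f := fun i j => A i j), hcol]
  have hnorms : ∑ i, √(∑ j, A i j ^ 2) ≤ Fintype.card (Fin k) :=
    hrows ▸ sum_le_sum fun i _ => hnorm i
  have hhad := abs_det_le_prod_row_norm A
  have hprod := prod_le_one_of_sum_le_card (fun i => Real.sqrt_nonneg _) hnorms
  refine ⟨hhad.trans hprod, fun hdet => ?_, IsPermutationMatrix.abs_det_eq_one⟩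
  have hnorm1 (i : Fin k) : √(∑ j, A i j ^ 2) = 1 :=
    eq_one_of_prod_eq_one_of_sum_le_card (fun i => Real.sqrt_nonneg _) hnorms
      (le_antisymm hprod (hdet ▸ hhad)) i
  have hsum1 (i : Fin k) : ∑ j, A i j = 1 := by
    have hle (i : Fin k) (_ : i ∈ univ) : 1 ≤ ∑ j, A i j := (hnorm1 i).symm.trans_le (hnorm i)
    refine ((sum_eq_sum_iff_of_le hle).mp ?_ i (mem_univ i)).symm
    simpa using hrows.symm
  exact isPermutationMatrix_of_rows_eq_single hA.ne_zero fun i =>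
    eq_single_of_sum_eq_one_of_sum_sq_eq_one hbd.subset (hdual i) (hsum1 i)
      (Real.sqrt_eq_one.mp (hnorm1 i))

theorem det_bound_sufficiently_scattered
    {k m : ℕ} (Pi0 : Matrix (Fin k) (Fin m) ℝ)
    (hPnn : ∀ a j, 0 ≤ Pi0 a j)
    (hrank : Pi0.rank = k)
    (hC : secondOrderCone k ⊆ matCone Pi0)
    (hbd : dualCone (matCone Pi0) ∩ frontier (secondOrderConeDual k)
      = {x | ∃ j : Fin k, ∃ lam : ℝ, 0 ≤ lam ∧ x = lam • (fun i => if i = j then (1:ℝ) else 0)})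
    (A : Matrix (Fin k) (Fin k) ℝ) (hA : IsUnit A.det)
    (hAP : ∀ a j, 0 ≤ (A * Pi0) a j)
    (hcol : ∀ j, ∑ i, A i j = 1) :
    |A.det| ≤ 1 ∧ (|A.det| = 1 ↔ IsPermutationMatrix A) :=
  det_bound_sufficiently_scattered_general Pi0 hC hbd A hA hAP hcol
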